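/- arXiv:1004.4040 — 9 statements merged into one kernel-verified Lean document; each statement's English description precedes it below -/
import Mathlib

section
/- Let n be a positive integer and m an integer. Define χ_{n,m} = (a_1, …, a_n) where a_i = ⌈i·m/n⌉ − ⌈(i−1)·m/n⌉. Then for every i with 0 ≤ i ≤ n, the cyclic shift χ_{n,m}[i] = (a_{i+1}, …, a_n, a_1, …, a_i) satisfies χ_{n,m}[i] ≤ χ_{n,m} in the lexicographic order on ℤ^n. -/
/-- The sequence `χ_{n,m}` as a function `Fin n → ℤ`; the entry at index `j`
(0-indexed) is `a_{j+1} = ⌈(j+1)·m/n⌉ − ⌈j·m/n⌉`. -/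
def chiSeq (n : ℕ) (m : ℤ) : Fin n → ℤ := fun j =>
  ⌈((((j : ℕ) : ℤ) + 1) * m : ℚ) / (n : ℚ)⌉ - ⌈((((j : ℕ) : ℤ)) * m : ℚ) / (n : ℚ)⌉

/-- Cyclic shift by `i` of a finite sequence: the first `i` entries are moved to the end. -/
def cycShift {α : Type*} {n : ℕ} (i : ℕ) (f : Fin n → α) : Fin n → α := fun j =>
  f ⟨((j : ℕ) + i) % n, Nat.mod_lt _ j.pos⟩

/-- Every cyclic shift of `χ_{n,m}` is lexicographically at most `χ_{n,m}`. -/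
theorem cycShift_chiSeq_le (n : ℕ) (hn : 0 < n) (m : ℤ) (i : ℕ) :
    toLex (cycShift i (chiSeq n m)) ≤ toLex (chiSeq n m) := by
  classical
  set C : ℕ → ℤ := fun k => ⌈((k : ℤ) * m : ℚ) / (n : ℚ)⌉ with hCdef
  have hC0 : C 0 = 0 := by simp [hCdef]
  have hCper : ∀ k, C (k + n) = C k + m := by
    intro k
    have hn' : (n : ℚ) ≠ 0 := by positivity
    simp only [hCdef]
    rw [show ((((k + n : ℕ) : ℤ) * m : ℚ)) / (n : ℚ)
        = ((k : ℤ) * m : ℚ) / (n : ℚ) + (m : ℚ) by push_cast; field_simp]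
    rw [Int.ceil_add_intCast]
  have hsub : ∀ a b, C (a + b) ≤ C a + C b := by
    intro a b
    have : ((((a + b : ℕ) : ℤ) * m : ℚ)) / (n : ℚ)
        = ((a : ℤ) * m : ℚ) / (n : ℚ) + ((b : ℤ) * m : ℚ) / (n : ℚ) := by
      push_cast; ring
    simp only [hCdef]
    rw [this]
    exact Int.ceil_add_le _ _
  set A : ℕ → ℤ := fun k => C (k + 1) - C k with hAdef
  have hAper : ∀ k, A (k + n) = A k := by
    intro k
    simp only [hAdef]
    rw [show k + n + 1 = (k + 1) + n by ring, hCper, hCper]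
    ring
  have hAadd : ∀ q k, A (k + n * q) = A k := by
    intro q
    induction q with
    | zero => simp
    | succ q ih => intro k; rw [Nat.mul_succ, ← Nat.add_assoc, hAper, ih]
  have hAmod : ∀ k, A (k % n) = A k := by
    intro k
    conv_rhs => rw [← Nat.mod_add_div k n]
    rw [hAadd]
  have hchi : ∀ (k : ℕ) (hk : k < n), chiSeq n m ⟨k, hk⟩ = A k := by
    intro k hk
    simp only [chiSeq, hAdef, hCdef]
    norm_num
  have hf : ∀ (k : ℕ) (hk : k < n), cycShift i (chiSeq n m) ⟨k, hk⟩ = A (i + k) := by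
    intro k hk
    show chiSeq n m ⟨(k + i) % n, _⟩ = A (i + k)
    rw [hchi]
    rw [hAmod, Nat.add_comm]
  by_cases hfg : cycShift i (chiSeq n m) = chiSeq n m
  · exact le_of_eq (congrArg toLex hfg)
  · have hex : ∃ k, ∃ hk : k < n,
        cycShift i (chiSeq n m) ⟨k, hk⟩ ≠ chiSeq n m ⟨k, hk⟩ := by
      by_contra h
      push_neg at h
      exact hfg (funext fun j => h j j.2)
    set j := Nat.find hex with hjdef
    obtain ⟨hj, hne⟩ := Nat.find_spec hex
    have hmin : ∀ k < j, ∀ hk : k < n,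
        cycShift i (chiSeq n m) ⟨k, hk⟩ = chiSeq n m ⟨k, hk⟩ := by
      intro k hk hkn
      have := Nat.find_min hex hk
      push_neg at this
      exact this hkn
    -- partial sums
    have hsumF : ∀ N, ∑ k ∈ Finset.range N, A (i + k) = C (i + N) - C i := by
      intro N
      exact Finset.sum_range_sub (fun t => C (i + t)) N
    have hsumG : ∀ N, ∑ k ∈ Finset.range N, A k = C N := by
      intro N
      have h := Finset.sum_range_sub C N
      rw [show (∑ k ∈ Finset.range N, A k) = C N - C 0 from h, hC0, sub_zero]
    have hagree : ∀ k < j, A (i + k) = A k := by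
      intro k hk
      have hkn : k < n := hk.trans hj
      have := hmin k hk hkn
      rwa [hf k hkn, hchi k hkn] at this
    have hle : A (i + j) ≤ A j := by
      have h1 : ∑ k ∈ Finset.range (j+1), A (i + k) ≤ ∑ k ∈ Finset.range (j+1), A k := by
        rw [hsumF, hsumG]
        have := hsub i (j+1)
        omega
      rw [Finset.sum_range_succ, Finset.sum_range_succ] at h1
      have h2 : ∑ k ∈ Finset.range j, A (i + k) = ∑ k ∈ Finset.range j, A k :=
        Finset.sum_congr rfl (fun k hk => hagree k (Finset.mem_range.mp hk))
      omega
    have hlt : cycShift i (chiSeq n m) ⟨j, hj⟩ < chiSeq n m ⟨j, hj⟩ := by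
      rw [hf j hj, hchi j hj]
      rw [hf j hj, hchi j hj] at hne
      exact lt_of_le_of_ne hle hne
    refine le_of_lt ⟨⟨j, hj⟩, fun k hk => ?_, hlt⟩
    have hkn : (k : ℕ) < n := k.2
    have := hmin k hk hkn
    simpa using this
end

section
/- Let n be a positive integer, m an integer, and χ_{n,m} = (a_1,…,a_n) with a_i = ⌈i·m/n⌉ − ⌈(i−1)·m/n⌉. Then for any sequence χ' ∈ ℤ^n whose entries sum to m, there exists an index i such that the cyclic shift χ'[i] is ≥ χ_{n,m} in the lexicographic order; equivalently, the lexicographic maximum over all cyclic shifts of χ' is ≥ χ_{n,m}. -/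
/-- Prefix criterion for lex order: if at every index where all earlier entries agree
the entry of `f` is at most that of `g`, then `f ≤ g` lexicographically. -/
theorem lex_of_forall {n : ℕ} (f g : Fin n → ℤ)
    (h : ∀ j : Fin n, (∀ t, t < j → f t = g t) → f j ≤ g j) :
    toLex f ≤ toLex g := by
  rcases eq_or_ne f g with rfl | hne
  · exact le_rfl
  · have hne' : (Finset.univ.filter (fun j => f j ≠ g j)).Nonempty := by
      rcases Function.ne_iff.mp hne with ⟨j, hj⟩
      exact ⟨j, by simp [hj]⟩
    set j := Finset.min' _ hne' with hjdef
    have hj : f j ≠ g j := by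
      have := Finset.min'_mem _ hne'
      simpa using this
    have hlt : ∀ t, t < j → f t = g t := by
      intro t ht
      by_contra hc
      have : j ≤ t := Finset.min'_le _ _ (by simp [hc])
      exact absurd ht (not_lt.mpr this)
    have hfg : f j < g j := lt_of_le_of_ne (h j hlt) hj
    exact le_of_lt ⟨j, hlt, hfg⟩

/-- For any `χ' ∈ ℤⁿ` with entry-sum `m`, some cyclic shift of `χ'` is
lexicographically at least `χ_{n,m}`. -/
theorem chiSeq_le_max_cycShift (n : ℕ) (hn : 0 < n) (m : ℤ) (χ' : Fin n → ℤ)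
    (hsum : ∑ j, χ' j = m) :
    ∃ i : ℕ, toLex (chiSeq n m) ≤ toLex (cycShift i χ') := by
  have hn0 : (n : ℚ) ≠ 0 := Nat.cast_ne_zero.mpr hn.ne'
  have hnQ : (0:ℚ) < n := Nat.cast_pos.mpr hn
  -- the periodized sequence and its partial sums
  set g : ℕ → ℤ := fun t => χ' ⟨t % n, Nat.mod_lt _ hn⟩ with hg
  set S : ℕ → ℤ := fun k => ∑ t ∈ Finset.range k, g t with hSdef
  have hS_add : ∀ a b : ℕ, S (a + b) = S a + ∑ t ∈ Finset.range b, g (a + t) := by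
    intro a b
    induction b with
    | zero => simp [hSdef]
    | succ b ih =>
      rw [← Nat.add_assoc]
      show ∑ t ∈ Finset.range (a + b + 1), g t = _
      rw [Finset.sum_range_succ, Finset.sum_range_succ]
      have : ∑ t ∈ Finset.range (a + b), g t = S (a + b) := rfl
      rw [this, ih]
      ring
  -- a full window sums to m
  have hwin : ∀ a : ℕ, ∑ t ∈ Finset.range n, g (a + t) = m := by
    intro a
    have hbij : Function.Bijective
        (fun t : Fin n => (⟨(a + ↑t) % n, Nat.mod_lt _ hn⟩ : Fin n)) := by
      apply Finite.injective_iff_bijective.mp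
      intro x y hxy
      have h1 : (a + ↑x) % n = (a + ↑y) % n := congrArg Fin.val hxy
      have h2 : (x:ℕ) % n = (y:ℕ) % n := Nat.ModEq.add_left_cancel' a h1
      exact Fin.ext (by rwa [Nat.mod_eq_of_lt x.isLt, Nat.mod_eq_of_lt y.isLt] at h2)
    have := Fintype.sum_bijective _ hbij
      (fun t : Fin n => χ' ⟨(a + ↑t) % n, Nat.mod_lt _ hn⟩) χ' (fun x => rfl)
    rw [← Fin.sum_univ_eq_sum_range (fun t => g (a + t))]
    simpa [hg, hsum] using this
  have hSper : ∀ k : ℕ, S (k + n) = S k + m := by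
    intro k; rw [hS_add k n, hwin k]
  -- discrepancy function and its minimizer
  set d : ℕ → ℤ := fun j => (n : ℤ) * S j - (j : ℤ) * m with hd
  have hdper : ∀ j : ℕ, d (j + n) = d j := by
    intro j
    simp only [hd, hSper j]
    push_cast
    ring
  have hdmul : ∀ q x : ℕ, d (x + n * q) = d x := by
    intro q
    induction q with
    | zero => simp
    | succ q ih =>
      intro x
      have : x + n * (q + 1) = (x + n * q) + n := by ring
      rw [this, hdper, ih]
  have hdmod : ∀ j : ℕ, d j = d (j % n) := by
    intro j
    conv_lhs => rw [← Nat.mod_add_div j n]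
    exact hdmul (j / n) (j % n)
  obtain ⟨i, hi_mem, hi_min⟩ :=
    Finset.exists_min_image (Finset.range n) d ⟨0, Finset.mem_range.mpr hn⟩
  have hmin : ∀ j : ℕ, d i ≤ d j := by
    intro j
    rw [hdmod j]
    exact hi_min _ (Finset.mem_range.mpr (Nat.mod_lt _ hn))
  -- key estimate: shifted partial sums dominate ceilings
  have hkey : ∀ k : ℕ, (⌈(((k:ℕ):ℤ) * m : ℚ) / (n:ℚ)⌉ : ℤ) ≤ S (i + k) - S i := by
    intro k
    have hz : ((k:ℕ):ℤ) * m ≤ (S (i + k) - S i) * (n:ℤ) := by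
      have h1 := hmin (i + k)
      simp only [hd] at h1
      push_cast at h1
      linarith
    rw [Int.ceil_le, div_le_iff₀ hnQ]
    exact_mod_cast hz
  -- telescoping of chiSeq partial sums
  set Cf : ℕ → ℤ := fun t => ⌈(((t:ℕ):ℤ) + 1) * m / (n:ℚ)⌉ - ⌈((((t:ℕ):ℤ)) * m : ℚ) / (n:ℚ)⌉
    with hCf
  have hCsum : ∀ k : ℕ, ∑ t ∈ Finset.range k, Cf t = ⌈(((k:ℕ):ℤ) * m : ℚ) / (n:ℚ)⌉ := by
    intro k
    induction k with
    | zero => simp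
    | succ k ih =>
      rw [Finset.sum_range_succ, ih, hCf]
      push_cast
      ring
  refine ⟨i, lex_of_forall _ _ ?_⟩
  intro j heq
  -- prefix sums up to j agree
  have hpre : ∑ t ∈ Finset.range (j:ℕ), Cf t = ∑ t ∈ Finset.range (j:ℕ), g (i + t) := by
    apply Finset.sum_congr rfl
    intro t ht
    have htn : t < n := lt_trans (Finset.mem_range.mp ht) j.isLt
    have htj : (⟨t, htn⟩ : Fin n) < j := Finset.mem_range.mp ht
    have := heq ⟨t, htn⟩ htj
    have h2 : chiSeq n m ⟨t, htn⟩ = Cf t := rfl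
    have h3 : cycShift i χ' ⟨t, htn⟩ = g (i + t) := by
      simp only [cycShift, hg]
      congr 1
      exact Fin.ext (by simp [Nat.add_comm])
    rw [h2] at this
    rw [this, h3]
  -- compare at j+1
  have hA := hkey ((j:ℕ) + 1)
  rw [hS_add i ((j:ℕ)+1)] at hA
  rw [Finset.sum_range_succ] at hA
  have hB : (⌈((((j:ℕ)+1 : ℕ):ℤ) * m : ℚ) / (n:ℚ)⌉ : ℤ)
      = ∑ t ∈ Finset.range (j:ℕ), Cf t + Cf (j:ℕ) := by
    rw [← Finset.sum_range_succ, hCsum]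
  rw [hB, hpre] at hA
  have hfinal : Cf (j:ℕ) ≤ g (i + (j:ℕ)) := by linarith
  have h2 : chiSeq n m j = Cf (j:ℕ) := rfl
  have h3 : cycShift i χ' j = g (i + (j:ℕ)) := by
    simp only [cycShift, hg]
    congr 1
    exact Fin.ext (by simp [Nat.add_comm])
  rw [h2, h3]
  exact hfinal
end

section
/- Let P be a linearly ordered set. Suppose θ = (a_1, a_2, …) ∈ P^∞ is an infinite sequence and γ ∈ P^n is an upper bound (in the lexicographic order on P^n) of all length-n contiguous subsequences of θ, i.e. γ ≥ (a_l, a_{l+1}, …, a_{l+n−1}) for all l ≥ 1. Then the concatenation (γ, θ) ≥ θ in the lexicographic order on P^∞. -/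
/-- Concatenation of a finite sequence `γ ∈ Pⁿ` with an infinite sequence `θ ∈ P^∞`. -/
def catSeq {P : Type*} (n : ℕ) (γ : Fin n → P) (θ : ℕ → P) : ℕ → P := fun k =>
  if h : k < n then γ ⟨k, h⟩ else θ (k - n)

/-- If `γ ∈ Pⁿ` is a lexicographic upper bound of all length-`n` contiguous
subsequences of the infinite sequence `θ`, then `(γ, θ) ≥ θ` lexicographically. -/
theorem le_cat_of_upper_bound {P : Type*} [LinearOrder P] (n : ℕ) (γ : Fin n → P)
    (θ : ℕ → P)
    (hub : ∀ l : ℕ, toLex (fun j : Fin n => θ (l + (j : ℕ))) ≤ toLex γ) :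
    toLex θ ≤ toLex (catSeq n γ θ) := by
  set c := catSeq n γ θ with hc
  rcases Nat.eq_zero_or_pos n with hn | hn
  · subst hn
    have hθc : θ = c := by
      funext k; simp [hc, catSeq]
    rw [hθc]
  by_cases heq : θ = c
  · rw [heq]
  have hex : ∃ i, θ i ≠ c i := Function.ne_iff.1 heq
  classical
  set i := Nat.find hex with hi
  have hne : θ i ≠ c i := Nat.find_spec hex
  have hmin : ∀ j, j < i → θ j = c j := by
    intro j hj
    by_contra hjc
    exact (Nat.find_min hex hj) hjc
  -- pattern lemma: below i, θ follows the periodic pattern given by γ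
  have hpat : ∀ k, k < i → θ k = γ ⟨k % n, Nat.mod_lt _ hn⟩ := by
    intro k
    induction k using Nat.strong_induction_on with
    | _ k ih =>
      intro hk
      rcases lt_or_ge k n with hkn | hkn
      · have hck : c k = γ ⟨k, hkn⟩ := by simp [hc, catSeq, hkn]
        rw [hmin k hk, hck]
        congr 1
        exact Fin.ext (Nat.mod_eq_of_lt hkn).symm
      · have hck : c k = θ (k - n) := by simp [hc, catSeq, Nat.not_lt.2 hkn]
        have hlt : k - n < k := Nat.sub_lt (lt_of_lt_of_le hn hkn) hn
        have := ih (k - n) hlt (lt_trans hlt hk)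
        rw [hmin k hk, hck, this]
        congr 1
        exact Fin.ext (Nat.mod_eq_sub_mod hkn).symm
  -- main claim: θ i < c i
  have hkey : θ i < c i := by
    rcases lt_or_ge i n with hin | hin
    · -- use the window at l = 0
      have hci : c i = γ ⟨i, hin⟩ := by simp [hc, catSeq, hin]
      have h0 := hub 0
      rcases lt_or_eq_of_le h0 with hlt | heq0
      · obtain ⟨j, hjpre, hjlt⟩ := hlt
        change θ (0 + (j : ℕ)) < γ j at hjlt
        rw [Nat.zero_add] at hjlt
        rcases lt_trichotomy (j : ℕ) i with hji | hji | hji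
        · have hθj : θ (j : ℕ) = γ j := by
            rw [hpat (j : ℕ) hji]
            congr 1
            exact Fin.ext (Nat.mod_eq_of_lt j.isLt)
          rw [hθj] at hjlt
          exact absurd hjlt (lt_irrefl _)
        · rw [hci]
          have hj' : (⟨i, hin⟩ : Fin n) = j := Fin.ext hji.symm
          rw [hj']
          rw [hji] at hjlt
          exact hjlt
        · have hpre := hjpre ⟨i, hin⟩ (by simpa [Fin.lt_def] using hji)
          change θ (0 + i) = γ ⟨i, hin⟩ at hpre
          rw [Nat.zero_add] at hpre
          rw [hci] at hne
          exact absurd hpre hne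
      · have hθγ : (fun j : Fin n => θ (0 + (j : ℕ))) = γ := toLex_inj.mp heq0
        have : θ i = γ ⟨i, hin⟩ := by
          have := congrFun hθγ ⟨i, hin⟩
          simpa using this
        rw [hci] at hne
        exact absurd this hne
    · -- i ≥ n; use the window at l = i - i % n
      have hr : i % n < n := Nat.mod_lt _ hn
      set r := i % n with hrdef
      set l := i - r with hldef
      have hlr : l + r = i := Nat.sub_add_cancel (Nat.mod_le _ _)
      have hleq : l = n * (i / n) := by
        have := Nat.div_add_mod i n
        omega
      have hln : l % n = 0 := by rw [hleq]; exact Nat.mul_mod_right _ _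
      -- c i = γ r
      have hci : c i = γ ⟨r, hr⟩ := by
        have hni : ¬ i < n := Nat.not_lt.2 hin
        have hsub : i - n < i := Nat.sub_lt (lt_of_lt_of_le hn hin) hn
        have : c i = θ (i - n) := by simp [hc, catSeq, hni]
        rw [this, hpat (i - n) hsub]
        congr 1
        exact Fin.ext (Nat.mod_eq_sub_mod hin).symm
      -- entries of the window before position r equal γ
      have hwin : ∀ j : Fin n, (j : ℕ) < r → θ (l + (j : ℕ)) = γ j := by
        intro j hj
        have hlji : l + (j : ℕ) < i := by omega
        rw [hpat _ hlji]
        congr 1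
        apply Fin.ext
        show (l + (j : ℕ)) % n = (j : ℕ)
        simp [Nat.add_mod, hln, Nat.mod_eq_of_lt j.isLt]
      have hl := hub l
      rcases lt_or_eq_of_le hl with hlt | heql
      · obtain ⟨j, hjpre, hjlt⟩ := hlt
        change θ (l + (j : ℕ)) < γ j at hjlt
        rcases lt_trichotomy (j : ℕ) r with hjr | hjr | hjr
        · rw [hwin j hjr] at hjlt
          exact absurd hjlt (lt_irrefl _)
        · rw [hci]
          have hj' : (⟨r, hr⟩ : Fin n) = j := Fin.ext hjr.symm
          have : l + (j : ℕ) = i := by omega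
          rw [this] at hjlt
          rw [hj']; exact hjlt
        · have hpre := hjpre ⟨r, hr⟩ (by simpa [Fin.lt_def] using hjr)
          change θ (l + r) = γ ⟨r, hr⟩ at hpre
          rw [hlr] at hpre
          rw [hci] at hne
          exact absurd hpre hne
      · have hθγ : (fun j : Fin n => θ (l + (j : ℕ))) = γ := toLex_inj.mp heql
        have := congrFun hθγ ⟨r, hr⟩
        simp only at this
        rw [show l + ((⟨r, hr⟩ : Fin n) : ℕ) = i from by simpa using hlr] at this
        rw [hci] at hne
        exact absurd this hne
  exact le_of_lt ⟨i, hmin, hkey⟩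
end

section
/- Let P be a linearly ordered set. For n ∈ ℕ let the symmetric group S_n act on P^n by permuting coordinates: τ·(p_1,…,p_n) = (p_{τ⁻¹(1)},…,p_{τ⁻¹(n)}). If a, a' ∈ P^n and b, b' ∈ P^m satisfy max(S_n·a) ≥ max(S_n·a') and max(S_m·b) ≥ max(S_m·b') with respect to the lexicographic order, then max(S_{n+m}·(a,b)) ≥ max(S_{n+m}·(a',b')), where (a,b) denotes the concatenation of a and b in P^{n+m}. -/
namespace MaxOrbitAux

open Finset

variable {P : Type*} [LinearOrder P]

/-- Number of occurrences of the value `v` in the tuple `x`. -/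
def cnt {k : ℕ} (x : Fin k → P) (v : P) : ℕ :=
  (Finset.univ.filter fun j => x j = v).card

lemma toLex_le_iff {k : ℕ} {f g : Fin k → P} :
    toLex f ≤ toLex g ↔ f = g ∨ ∃ i, (∀ j, j < i → f j = g j) ∧ f i < g i := by
  constructor
  · intro h
    have h' : toLex f = toLex g ∨ Pi.Lex (· < ·) (@fun _ => (· < ·)) f g := h
    rcases h' with heq | hlex
    · exact Or.inl (toLex.injective heq)
    · exact Or.inr hlex
  · intro h
    rcases h with rfl | hlex
    · exact le_refl _
    · show toLex f = toLex g ∨ Pi.Lex (· < ·) (@fun _ => (· < ·)) f g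
      exact Or.inr hlex

lemma lex_total {k : ℕ} (f g : Fin k → P) :
    toLex f ≤ toLex g ∨ toLex g ≤ toLex f := by
  by_cases hfg : f = g
  · exact Or.inl (le_of_eq (congrArg toLex hfg))
  · classical
    set D := Finset.univ.filter fun j => f j ≠ g j with hDdef
    have hD : D.Nonempty := by
      obtain ⟨j, hj⟩ := Function.ne_iff.mp hfg
      exact ⟨j, by simp [hDdef, hj]⟩
    set i := D.min' hD with hidef
    have hiD : i ∈ D := D.min'_mem hD
    have hi : f i ≠ g i := by
      simpa [hDdef] using hiD
    have hmin : ∀ j, j < i → f j = g j := by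
      intro j hj
      by_contra hne
      have : i ≤ j := D.min'_le j (by simp [hDdef, hne])
      exact absurd (lt_of_lt_of_le hj this) (lt_irrefl j)
    rcases lt_or_gt_of_ne hi with h | h
    · exact Or.inl (toLex_le_iff.mpr (Or.inr ⟨i, hmin, h⟩))
    · exact Or.inr (toLex_le_iff.mpr (Or.inr ⟨i, fun j hj => (hmin j hj).symm, h⟩))

lemma not_le_exists {k : ℕ} {f g : Fin k → P} (h : ¬ toLex f ≤ toLex g) :
    ∃ i, (∀ j, j < i → g j = f j) ∧ g i < f i := by
  have hle : toLex g ≤ toLex f := (lex_total f g).resolve_left h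
  rcases toLex_le_iff.mp hle with heq | hex
  · exact absurd (le_of_eq (congrArg toLex heq.symm)) h
  · exact hex

lemma cnt_comp_perm {k : ℕ} (x : Fin k → P) (σ : Equiv.Perm (Fin k)) :
    cnt (x ∘ σ) = cnt x := by
  funext v
  unfold cnt
  apply Finset.card_bij (fun j _ => σ j)
  · intro a ha
    simp only [Finset.mem_filter, Finset.mem_univ, true_and, Function.comp] at ha ⊢
    exact ha
  · intro a _ b _ h
    exact σ.injective h
  · intro c hc
    refine ⟨σ.symm c, ?_, by simp⟩
    simp only [Finset.mem_filter, Finset.mem_univ, true_and, Function.comp] at hc ⊢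
    simpa using hc

lemma cnt_append {n m : ℕ} (a : Fin n → P) (b : Fin m → P) :
    cnt (Fin.append a b) = fun v => cnt a v + cnt b v := by
  funext v
  simp only [cnt, Finset.card_filter]
  rw [Fin.sum_univ_add]
  simp [Fin.append_left, Fin.append_right]

/-- An antitone tuple is lexicographically maximal in its orbit. -/
lemma antitone_lex_max {k : ℕ} {f : Fin k → P} (hf : Antitone f) (σ : Equiv.Perm (Fin k)) :
    toLex (f ∘ σ) ≤ toLex f := by
  by_contra h
  obtain ⟨i, hji, hi⟩ := not_le_exists h
  simp only [Function.comp_apply] at hji hi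
  set v := f (σ i) with hv
  set A : Finset (Fin k) := Finset.univ.filter fun j => v ≤ f j with hA
  have hiA : i ∉ A := by
    simp only [hA, Finset.mem_filter, Finset.mem_univ, true_and]
    exact not_le.mpr hi
  have hAlt : ∀ j ∈ A, j < i := by
    intro j hj
    simp only [hA, Finset.mem_filter, Finset.mem_univ, true_and] at hj
    by_contra hge
    push_neg at hge
    exact absurd (hj.trans (hf hge)) (not_le.mpr hi)
  have himg : ∀ j ∈ insert i A, σ j ∈ A := by
    intro j hj
    rcases Finset.mem_insert.mp hj with rfl | hj
    · simp [hA, hv]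
    · simp only [hA, Finset.mem_filter, Finset.mem_univ, true_and] at hj ⊢
      rw [← hji j (hAlt j (by simpa [hA] using hj))]
      exact hj
  have hcard : (insert i A).card ≤ A.card := by
    calc (insert i A).card = ((insert i A).image σ).card :=
          (Finset.card_image_of_injective _ σ.injective).symm
      _ ≤ A.card := Finset.card_le_card (by
          intro x hx
          obtain ⟨j, hj, rfl⟩ := Finset.mem_image.mp hx
          exact himg j hj)
  rw [Finset.card_insert_of_notMem hiA] at hcard
  omega

/-- Every tuple has an antitone rearrangement. -/
lemma exists_antitone {k : ℕ} (x : Fin k → P) :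
    ∃ σ : Equiv.Perm (Fin k), Antitone (x ∘ σ) := by
  let y : Fin k → Pᵒᵈ := fun j => OrderDual.toDual (x j)
  refine ⟨Tuple.sort y, fun i j hij => ?_⟩
  exact Tuple.monotone_sort y hij

/-- If two antitone tuples compare strictly in lex order, their count profiles
compare strictly at the top. -/
lemma lt_cnt {k : ℕ} {f g : Fin k → P} (hf : Antitone f) (hg : Antitone g)
    (hji' : ∃ i, (∀ j, j < i → f j = g j) ∧ f i < g i) :
    ∃ v, cnt f v < cnt g v ∧ ∀ w, v < w → cnt f w = cnt g w := by
  obtain ⟨i, hji, hi⟩ := hji'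
  refine ⟨g i, ?_, ?_⟩
  · apply Finset.card_lt_card
    have hsub : (Finset.univ.filter fun j => f j = g i) ⊆
        (Finset.univ.filter fun j => g j = g i) := by
      intro j hj
      simp only [Finset.mem_filter, Finset.mem_univ, true_and] at hj ⊢
      have hjlt : j < i := by
        by_contra hge
        push_neg at hge
        have := hf hge
        rw [hj] at this
        exact absurd this (not_le.mpr hi)
      rw [← hji j hjlt]
      exact hj
    rw [Finset.ssubset_iff_of_subset hsub]
    exact ⟨i, by simp, by simp [ne_of_lt hi]⟩
  · intro w hw
    unfold cnt
    congr 1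
    ext j
    simp only [Finset.mem_filter, Finset.mem_univ, true_and]
    constructor
    · intro hj
      have hjlt : j < i := by
        by_contra hge
        push_neg at hge
        have h1 : f j ≤ f i := hf hge
        rw [hj] at h1
        exact absurd (h1.trans_lt (hi.trans hw)) (lt_irrefl w)
      rw [← hji j hjlt]
      exact hj
    · intro hj
      have hjlt : j < i := by
        by_contra hge
        push_neg at hge
        have h1 : g j ≤ g i := hg hge
        rw [hj] at h1
        exact absurd (h1.trans_lt hw) (lt_irrefl w)
      rw [hji j hjlt]
      exact hj

/-- Dominance of count profiles: either equal, or strictly larger at the largest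
value where they differ. -/
def CDom (c d : P → ℕ) : Prop :=
  c = d ∨ ∃ u, c u < d u ∧ ∀ w, u < w → c w = d w

lemma CDom.add {c₁ c₂ d₁ d₂ : P → ℕ} (h₁ : CDom c₁ d₁) (h₂ : CDom c₂ d₂) :
    CDom (fun v => c₁ v + c₂ v) (fun v => d₁ v + d₂ v) := by
  rcases h₁ with rfl | ⟨u₁, hu₁, hw₁⟩
  · rcases h₂ with rfl | ⟨u₂, hu₂, hw₂⟩
    · exact Or.inl rfl
    · refine Or.inr ⟨u₂, ?_, fun w hw => ?_⟩
      · show c₁ u₂ + c₂ u₂ < c₁ u₂ + d₂ u₂; omega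
      · show c₁ w + c₂ w = c₁ w + d₂ w; rw [hw₂ w hw]
  · rcases h₂ with rfl | ⟨u₂, hu₂, hw₂⟩
    · refine Or.inr ⟨u₁, ?_, fun w hw => ?_⟩
      · show c₁ u₁ + c₂ u₁ < d₁ u₁ + c₂ u₁; omega
      · show c₁ w + c₂ w = d₁ w + c₂ w; rw [hw₁ w hw]
    · rcases lt_trichotomy u₁ u₂ with h | rfl | h
      · refine Or.inr ⟨u₂, ?_, fun w hw => ?_⟩
        · show c₁ u₂ + c₂ u₂ < d₁ u₂ + d₂ u₂; have := hw₁ u₂ h; omega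
        · show c₁ w + c₂ w = d₁ w + d₂ w; rw [hw₁ w (h.trans hw), hw₂ w hw]
      · refine Or.inr ⟨u₁, ?_, fun w hw => ?_⟩
        · show c₁ u₁ + c₂ u₁ < d₁ u₁ + d₂ u₁; omega
        · show c₁ w + c₂ w = d₁ w + d₂ w; rw [hw₁ w hw, hw₂ w hw]
      · refine Or.inr ⟨u₁, ?_, fun w hw => ?_⟩
        · show c₁ u₁ + c₂ u₁ < d₁ u₁ + d₂ u₁; have := hw₂ u₁ h; omega
        · show c₁ w + c₂ w = d₁ w + d₂ w; rw [hw₁ w hw, hw₂ w (h.trans hw)]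

lemma antitone_le_cdom {k : ℕ} {f g : Fin k → P} (hf : Antitone f) (hg : Antitone g)
    (h : toLex f ≤ toLex g) : CDom (cnt f) (cnt g) := by
  rcases toLex_le_iff.mp h with rfl | hex
  · exact Or.inl rfl
  · exact Or.inr (lt_cnt hf hg hex)

/-- Conversely, count dominance between antitone tuples gives lex comparison. -/
lemma cdom_le {k : ℕ} {s s' : Fin k → P} (hs : Antitone s) (hs' : Antitone s')
    (h : CDom (cnt s') (cnt s)) : toLex s' ≤ toLex s := by
  by_contra hc
  obtain ⟨v, hv, hvw⟩ := lt_cnt hs hs' (not_le_exists hc)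
  rcases h with heq | ⟨u, hu, huw⟩
  · have := congrFun heq v
    omega
  · rcases lt_trichotomy u v with h' | rfl | h'
    · have := huw v h'
      omega
    · omega
    · have := hvw u h'
      omega

/-- Moving along the orbit preserves the lex-dominance relation: `x ∘ τ` is
dominated by the antitone rearrangement. -/
lemma le_sorted {k : ℕ} {x : Fin k → P} {σ : Equiv.Perm (Fin k)}
    (hσ : Antitone (x ∘ σ)) (τ : Equiv.Perm (Fin k)) :
    toLex (x ∘ τ) ≤ toLex (x ∘ σ) := by
  have h := antitone_lex_max hσ (σ⁻¹ * τ)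
  have e : (x ∘ σ) ∘ (σ⁻¹ * τ : Equiv.Perm (Fin k)) = x ∘ τ := by
    funext j
    simp [Function.comp, Equiv.Perm.mul_apply]
  rwa [e] at h

end MaxOrbitAux

/-- Geck–Pfeiffer style lemma on lexicographic maxima over symmetric-group orbits:
if the maximum of the `Sₙ`-orbit of `a` dominates that of `a'`, and the maximum of
the `Sₘ`-orbit of `b` dominates that of `b'`, then the maximum of the
`S_{n+m}`-orbit of the concatenation `(a, b)` dominates that of `(a', b')`.
"max(orbit x) ≥ max(orbit x')" is expressed as: every permutation of `x'` is
lexicographically dominated by some permutation of `x`. -/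
theorem max_orbit_append_mono {P : Type*} [LinearOrder P] (n m : ℕ)
    (a a' : Fin n → P) (b b' : Fin m → P)
    (ha : ∀ τ' : Equiv.Perm (Fin n), ∃ τ : Equiv.Perm (Fin n),
      toLex (a' ∘ τ') ≤ toLex (a ∘ τ))
    (hb : ∀ τ' : Equiv.Perm (Fin m), ∃ τ : Equiv.Perm (Fin m),
      toLex (b' ∘ τ') ≤ toLex (b ∘ τ)) :
    ∀ π' : Equiv.Perm (Fin (n + m)), ∃ π : Equiv.Perm (Fin (n + m)),
      toLex (Fin.append a' b' ∘ π') ≤ toLex (Fin.append a b ∘ π) := by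
  classical
  intro π'
  open MaxOrbitAux in
  obtain ⟨σ, hσ⟩ := MaxOrbitAux.exists_antitone (Fin.append a b)
  obtain ⟨σ', hσ'⟩ := MaxOrbitAux.exists_antitone (Fin.append a' b')
  refine ⟨σ, le_trans (MaxOrbitAux.le_sorted hσ' π') ?_⟩
  -- reduce to count dominance
  apply MaxOrbitAux.cdom_le hσ hσ'
  rw [MaxOrbitAux.cnt_comp_perm, MaxOrbitAux.cnt_comp_perm,
    MaxOrbitAux.cnt_append, MaxOrbitAux.cnt_append]
  -- per-part count dominance
  obtain ⟨τa, hτa⟩ := MaxOrbitAux.exists_antitone a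
  obtain ⟨τa', hτa'⟩ := MaxOrbitAux.exists_antitone a'
  obtain ⟨τb, hτb⟩ := MaxOrbitAux.exists_antitone b
  obtain ⟨τb', hτb'⟩ := MaxOrbitAux.exists_antitone b'
  have hca : MaxOrbitAux.CDom (MaxOrbitAux.cnt a') (MaxOrbitAux.cnt a) := by
    obtain ⟨τ, hτ⟩ := ha τa'
    have h1 : toLex (a' ∘ τa') ≤ toLex (a ∘ τa) :=
      hτ.trans (MaxOrbitAux.le_sorted hτa τ)
    have h2 := MaxOrbitAux.antitone_le_cdom hτa' hτa h1
    rwa [MaxOrbitAux.cnt_comp_perm, MaxOrbitAux.cnt_comp_perm] at h2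
  have hcb : MaxOrbitAux.CDom (MaxOrbitAux.cnt b') (MaxOrbitAux.cnt b) := by
    obtain ⟨τ, hτ⟩ := hb τb'
    have h1 : toLex (b' ∘ τb') ≤ toLex (b ∘ τb) :=
      hτ.trans (MaxOrbitAux.le_sorted hτb τ)
    have h2 := MaxOrbitAux.antitone_le_cdom hτb' hτb h1
    rwa [MaxOrbitAux.cnt_comp_perm, MaxOrbitAux.cnt_comp_perm] at h2
  exact MaxOrbitAux.CDom.add hca hcb
end

section
/- Let W̃ be an extended affine Weyl group and w̃ ∈ W̃ an element with l(w̃) = ⟨v, 2ρ⟩, where v is the dominant representative of the Newton point of w̃. Then for every positive integer n, l(w̃^n) = n·l(w̃). -/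
/-- If an element `w` of an extended affine Weyl group (modeled abstractly by a group
with a subadditive length function `ℓ`) satisfies `ℓ(w) = ⟨v, 2ρ⟩`, where `v` is the
dominant representative of its Newton point — encoded by `ℓ(w^m) = m · q` for the
translation power `w^m` and `q = ⟨v, 2ρ⟩` — then `ℓ(w^n) = n · ℓ(w)` for every
positive integer `n`. -/
theorem good_of_length_eq_newton {G : Type*} [Group G] (ℓ : G → ℕ)
    (hsub : ∀ x y : G, ℓ (x * y) ≤ ℓ x + ℓ y)
    (w : G) (m : ℕ) (hm : 0 < m)
    (htrans : ∀ k : ℕ, ℓ (w ^ (m * k)) = k * ℓ (w ^ m))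
    (q : ℚ) (hq : (ℓ (w ^ m) : ℚ) = m * q)
    (hgood : (ℓ w : ℚ) = q) :
    ∀ n : ℕ, 0 < n → ℓ (w ^ n) = n * ℓ w := by
  -- Upper bound by subadditivity
  have hub : ∀ k : ℕ, 0 < k → ℓ (w ^ k) ≤ k * ℓ w := by
    intro k hk
    induction k with
    | zero => omega
    | succ k ih =>
      rcases Nat.eq_zero_or_pos k with hk0 | hk0
      · subst hk0; simp
      · have h := hsub (w ^ k) w
        rw [← pow_succ] at h
        calc ℓ (w ^ (k + 1)) ≤ ℓ (w ^ k) + ℓ w := h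
          _ ≤ k * ℓ w + ℓ w := by have := ih hk0; omega
          _ = (k + 1) * ℓ w := by ring
  -- ℓ(w^m) = m * ℓ w
  have hmw : ℓ (w ^ m) = m * ℓ w := by
    have : (ℓ (w ^ m) : ℚ) = (m : ℚ) * (ℓ w : ℚ) := by rw [hq, hgood]
    exact_mod_cast this
  intro n hn
  rcases Nat.lt_or_ge m 2 with hm2 | hm2
  · -- m = 1 : direct from htrans
    have hm1 : m = 1 := by omega
    subst hm1
    have := htrans n
    rw [one_mul] at this
    rw [this, hmw, one_mul]
  · -- m ≥ 2
    have hle : ℓ (w ^ n) ≤ n * ℓ w := hub n hn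
    have hmn : ℓ (w ^ (m * n)) = m * n * ℓ w := by
      rw [htrans n, hmw]; ring
    have hnm : n ≤ m * n := Nat.le_mul_of_pos_left n hm
    have hpos : 0 < m * n - n := by
      have : 2 * n ≤ m * n := Nat.mul_le_mul_right n hm2
      omega
    have hsplit : w ^ (m * n) = w ^ n * w ^ (m * n - n) := by
      rw [← pow_add]; congr 1; omega
    have hge : n * ℓ w ≤ ℓ (w ^ n) := by
      have key : n * ℓ w + (m * n - n) * ℓ w ≤ ℓ (w ^ n) + (m * n - n) * ℓ w := by
        calc n * ℓ w + (m * n - n) * ℓ w = (n + (m * n - n)) * ℓ w := by rw [Nat.add_mul]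
          _ = m * n * ℓ w := by congr 1; omega
          _ = ℓ (w ^ (m * n)) := hmn.symm
          _ ≤ ℓ (w ^ n) + ℓ (w ^ (m * n - n)) := by rw [hsplit]; exact hsub _ _
          _ ≤ ℓ (w ^ n) + (m * n - n) * ℓ w := by
              exact Nat.add_le_add_left (hub _ hpos) _
      exact Nat.le_of_add_le_add_right key
    omega
end

section
/- Let (W, S̃) be a Coxeter group (or an extension of one by length-zero elements) with length function l and Bruhat order ≤. Suppose w̃, x̃ ∈ W̃ satisfy l(x̃⁻¹w̃) = l(w̃) − l(x̃), and suppose w̃ is terminal, meaning that for every w̃' obtained from w̃ by a sequence of conjugations by simple reflections each of which does not increase length, one has l(w̃') = l(w̃). Then w̃ and x̃⁻¹w̃x̃ are connected by a sequence of length-preserving conjugations by simple reflections and length-zero elements (w̃ ≈̃ x̃⁻¹w̃x̃); in particular l(x̃⁻¹w̃x̃) = l(w̃). -/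
/-- One conjugation step in `W̃`: conjugation by a simple reflection `s ∈ S̃` that
weakly decreases the length, or conjugation by a length-zero element `a ∈ Ω`. -/
def stepRel {G : Type*} [Group G] (ℓ : G → ℕ) (S Ω : Set G) (w w' : G) : Prop :=
  (∃ s ∈ S, w' = s * w * s ∧ ℓ w' ≤ ℓ w) ∨ (∃ a ∈ Ω, w' = a * w * a⁻¹)

/-- Auxiliary chain-building lemma: if `ℓ (w * u⁻¹) + ℓ u = ℓ w` (so `w` is the
"reduced" product `(w u⁻¹) · u`) and every element reachable from `w` has the same
length as `w`, then `w` reaches `u * w * u⁻¹` by a chain of allowed steps.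
Induction on `ℓ u`, peeling simple reflections off the left of `u` via `hdec`. -/
theorem conj_chain_aux {G : Type*} [Group G] (ℓ : G → ℕ) (S Ω : Set G)
    (hS : ∀ s ∈ S, s * s = 1)
    (hstepr : ∀ s ∈ S, ∀ w : G, ℓ (w * s) = ℓ w + 1 ∨ ℓ (w * s) + 1 = ℓ w)
    (hsub : ∀ x y : G, ℓ (x * y) ≤ ℓ x + ℓ y)
    (hdec : ∀ x : G, 0 < ℓ x → ∃ s ∈ S, ∃ x' : G, x = s * x' ∧ ℓ x' + 1 = ℓ x)
    (hzero : ∀ x : G, ℓ x = 0 → x ∈ Ω) :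
    ∀ (n : ℕ) (u w : G), ℓ u = n → ℓ (w * u⁻¹) + ℓ u = ℓ w →
      (∀ w' : G, Relation.ReflTransGen (stepRel ℓ S Ω) w w' → ℓ w' = ℓ w) →
      Relation.ReflTransGen (stepRel ℓ S Ω) w (u * w * u⁻¹) := by
  intro n
  induction n with
  | zero =>
    intro u w hu _ _
    exact Relation.ReflTransGen.single (Or.inr ⟨u, hzero u hu, rfl⟩)
  | succ n ih =>
    intro u w hu hC hterm
    obtain ⟨t, htS, u', huu, hu'⟩ := hdec u (by omega)
    have hu'n : ℓ u' = n := by omega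
    have htt : t * t = 1 := hS t htS
    have htinv : t⁻¹ = t := inv_eq_of_mul_eq_one_right htt
    have hwu' : w * u'⁻¹ = w * u⁻¹ * t := by
      rw [huu]; simp [mul_inv_rev, htinv, mul_assoc, htt]
    -- propagate the condition to u'
    have hC' : ℓ (w * u'⁻¹) + ℓ u' = ℓ w := by
      rcases hstepr t htS (w * u⁻¹) with h | h
      · rw [hwu', h]; omega
      · exfalso
        have hb : ℓ ((w * u'⁻¹) * u') ≤ ℓ (w * u'⁻¹) + ℓ u' := hsub _ _
        rw [show (w * u'⁻¹) * u' = w by group] at hb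
        rw [hwu'] at hb
        omega
    have hrt' := ih u' w hu'n hC' hterm
    have hlenT' : ℓ (u' * w * u'⁻¹) = ℓ w := hterm _ hrt'
    have heq : u * w * u⁻¹ = t * (u' * w * u'⁻¹) * t := by
      rw [huu]; simp [mul_inv_rev, htinv, mul_assoc]
    have hle : ℓ (u * w * u⁻¹) ≤ ℓ (u' * w * u'⁻¹) := by
      rw [hlenT']
      have : ℓ (u * (w * u⁻¹)) ≤ ℓ u + ℓ (w * u⁻¹) := hsub _ _
      rw [show u * (w * u⁻¹) = u * w * u⁻¹ by group] at this
      omega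
    exact hrt'.tail (Or.inl ⟨t, htS, heq, hle⟩)

/-- Lemma on terminal elements (He, Lemma `gen`): in an extended affine Weyl group
`W̃ = W_a ⋊ Ω` (modeled abstractly by a group with a Coxeter-like length function
`ℓ`, simple reflections `S` and length-zero elements `Ω`), if
`ℓ(x̃⁻¹w̃) = ℓ(w̃) − ℓ(x̃)` and `w̃` is terminal — every chain of weakly
length-decreasing conjugations from `w̃` preserves the length — then `w̃ ≈̃ x̃⁻¹w̃x̃`:
each is reachable from the other by such chains, and `ℓ(x̃⁻¹w̃x̃) = ℓ(w̃)`. -/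
theorem terminal_strongly_conj {G : Type*} [Group G] (ℓ : G → ℕ) (S Ω : Set G)
    (hS : ∀ s ∈ S, s * s = 1)
    (hlen1 : ∀ s ∈ S, ℓ s = 1)
    (hstepl : ∀ s ∈ S, ∀ w : G, ℓ (s * w) = ℓ w + 1 ∨ ℓ (s * w) + 1 = ℓ w)
    (hstepr : ∀ s ∈ S, ∀ w : G, ℓ (w * s) = ℓ w + 1 ∨ ℓ (w * s) + 1 = ℓ w)
    (hΩ : ∀ a ∈ Ω, ∀ w : G, ℓ (a * w * a⁻¹) = ℓ w)
    (hsub : ∀ x y : G, ℓ (x * y) ≤ ℓ x + ℓ y)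
    (hdec : ∀ x : G, 0 < ℓ x → ∃ s ∈ S, ∃ x' : G, x = s * x' ∧ ℓ x' + 1 = ℓ x)
    (hzero : ∀ x : G, ℓ x = 0 → x ∈ Ω)
    (w x : G) (hx : ℓ (x⁻¹ * w) + ℓ x = ℓ w)
    (hterm : ∀ w' : G, Relation.ReflTransGen (stepRel ℓ S Ω) w w' → ℓ w' = ℓ w) :
    Relation.ReflTransGen (stepRel ℓ S Ω) w (x⁻¹ * w * x) ∧
      Relation.ReflTransGen (stepRel ℓ S Ω) (x⁻¹ * w * x) w ∧
      ℓ (x⁻¹ * w * x) = ℓ w := by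
  -- Forward chain: conjugate by u := x⁻¹ * w, since u * w * u⁻¹ = x⁻¹ * w * x.
  have key1 : Relation.ReflTransGen (stepRel ℓ S Ω) w (x⁻¹ * w * x) := by
    have hC : ℓ (w * (x⁻¹ * w)⁻¹) + ℓ (x⁻¹ * w) = ℓ w := by
      rw [show w * (x⁻¹ * w)⁻¹ = x by group]
      omega
    have h := conj_chain_aux ℓ S Ω hS hstepr hsub hdec hzero (ℓ (x⁻¹ * w)) (x⁻¹ * w) w
      rfl hC hterm
    rwa [show (x⁻¹ * w) * w * (x⁻¹ * w)⁻¹ = x⁻¹ * w * x by group] at h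
  have h3 : ℓ (x⁻¹ * w * x) = ℓ w := hterm _ key1
  -- Backward chain: conjugate x⁻¹ * w * x by x, since x * (x⁻¹ w x) * x⁻¹ = w.
  have hterm2 : ∀ g : G, Relation.ReflTransGen (stepRel ℓ S Ω) (x⁻¹ * w * x) g →
      ℓ g = ℓ (x⁻¹ * w * x) := by
    intro g hg
    rw [h3]
    exact hterm g (key1.trans hg)
  have key2 : Relation.ReflTransGen (stepRel ℓ S Ω) (x⁻¹ * w * x) w := by
    have hC : ℓ ((x⁻¹ * w * x) * x⁻¹) + ℓ x = ℓ (x⁻¹ * w * x) := by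
      rw [show (x⁻¹ * w * x) * x⁻¹ = x⁻¹ * w by group, h3]
      omega
    have h := conj_chain_aux ℓ S Ω hS hstepr hsub hdec hzero (ℓ x) x (x⁻¹ * w * x)
      rfl hC hterm2
    rwa [show x * (x⁻¹ * w * x) * x⁻¹ = w by group] at h
  exact ⟨key1, key2, h3⟩
end

section
/- Let w̃ = t^χ w with χ ∈ P∨ dominant and w ∈ W, and let γ ∈ P∨ be dominant and minuscule for w̃, meaning: for every positive root α with ⟨γ, α⟩ ≥ 2, one has ⟨χ − γ, α⟩ ≥ −1 if w⁻¹α is positive and ⟨χ − γ, α⟩ ≥ 0 if w⁻¹α is negative. Set τ = t^γ w_{I(t^γ)} w_S, where w_S is the longest element of W and w_{I(t^γ)} is the longest element of the parabolic subgroup for I(t^γ) = { j ∈ S : ⟨γ, α_j⟩ = 0 }. Then l(τ⁻¹ w̃) = l(w̃) − l(τ). -/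
/-- The Iwahori–Matsumoto length of `t^χ w` in an extended affine Weyl group,
in an abstract model: `l(t^χ w) = Σ_{α∈Φ⁺, w⁻¹α∈Φ⁺} |⟨χ,α⟩| +
Σ_{α∈Φ⁺, w⁻¹α∈Φ⁻} |⟨χ,α⟩−1|`. -/
def imLength {Q N : Type*} [AddCommGroup Q] [DecidableEq Q] [AddCommGroup N]
    {W : Type*} [Group W] [DistribMulAction W Q]
    (Φpos : Finset Q) (pair : N →+ Q →+ ℤ) (χ : N) (w : W) : ℤ :=
  (∑ a ∈ Φpos.filter (fun a => w⁻¹ • a ∈ Φpos), |pair χ a|) +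
    ∑ a ∈ Φpos.filter (fun a => w⁻¹ • a ∉ Φpos), |pair χ a - 1|

/-- He's Lemma on minuscule coweights: let `w̃ = t^χ w` with `χ` dominant, let
`γ` be dominant and minuscule for `w̃`, and let `τ = t^γ w_{I(t^γ)} w_S`, where
`u = w_{I(t^γ)} w_S` is characterized by: `u⁻¹` sends a positive root `a` to a
positive root iff `⟨γ, a⟩ = 0`. Since `τ⁻¹ w̃ = t^{u⁻¹(χ−γ)} (u⁻¹ w)`, the
conclusion `l(τ⁻¹ w̃) = l(w̃) − l(τ)` reads
`ℓ(u⁻¹·(χ−γ), u⁻¹ w) = ℓ(χ, w) − ℓ(γ, u)`. -/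
theorem length_sub_of_minuscule {Q N : Type*} [AddCommGroup Q] [DecidableEq Q]
    [AddCommGroup N] {W : Type*} [Group W] [DistribMulAction W Q] [DistribMulAction W N]
    (Φpos : Finset Q) (pair : N →+ Q →+ ℤ)
    (hequi : ∀ (u : W) (χ₀ : N) (a : Q), pair (u • χ₀) (u • a) = pair χ₀ a)
    (hW : ∀ (u : W), ∀ a ∈ Φpos, u • a ∈ Φpos ∨ -(u • a) ∈ Φpos)
    (hdisj : ∀ a ∈ Φpos, -a ∉ Φpos)
    (χ γ : N) (w u : W)
    (hχdom : ∀ a ∈ Φpos, 0 ≤ pair χ a)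
    (hγdom : ∀ a ∈ Φpos, 0 ≤ pair γ a)
    (hmin : ∀ a ∈ Φpos, 2 ≤ pair γ a →
      (w⁻¹ • a ∈ Φpos → -1 ≤ pair χ a - pair γ a) ∧
        (w⁻¹ • a ∉ Φpos → 0 ≤ pair χ a - pair γ a))
    (hu : ∀ a ∈ Φpos, (u⁻¹ • a ∈ Φpos ↔ pair γ a = 0)) :
    imLength Φpos pair (u⁻¹ • (χ - γ)) (u⁻¹ * w) =
      imLength Φpos pair χ w - imLength Φpos pair γ u := by
  classical
  have hsingle : ∀ (χ₀ : N) (v : W), imLength Φpos pair χ₀ v =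
      ∑ a ∈ Φpos, (if v⁻¹ • a ∈ Φpos then |pair χ₀ a| else |pair χ₀ a - 1|) := by
    intro χ₀ v
    rw [imLength, Finset.sum_filter, Finset.sum_filter, ← Finset.sum_add_distrib]
    refine Finset.sum_congr rfl fun a _ => ?_
    by_cases h : v⁻¹ • a ∈ Φpos <;> simp [h]
  rw [hsingle, hsingle, hsingle, ← Finset.sum_sub_distrib]
  refine Finset.sum_nbij' (fun a => if u • a ∈ Φpos then u • a else -(u • a))
    (fun b => if u⁻¹ • b ∈ Φpos then u⁻¹ • b else -(u⁻¹ • b)) ?_ ?_ ?_ ?_ ?_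
  · intro a ha
    by_cases h : u • a ∈ Φpos
    · simpa [h] using h
    · simpa [h] using (hW u a ha).resolve_left h
  · intro b hb
    by_cases h : u⁻¹ • b ∈ Φpos
    · simpa [h] using h
    · simpa [h] using (hW u⁻¹ b hb).resolve_left h
  · intro a ha
    by_cases h : u • a ∈ Φpos
    · simp [h, inv_smul_smul, ha]
    · have h2 : u⁻¹ • (-(u • a)) = -a := by rw [smul_neg, inv_smul_smul]
      simp [h, h2, hdisj a ha, ha]
  · intro b hb
    by_cases h : u⁻¹ • b ∈ Φpos
    · simp [h, smul_inv_smul, hb]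
    · have h2 : u • (-(u⁻¹ • b)) = -b := by rw [smul_neg, smul_inv_smul]
      simp [h, h2, hdisj b hb, hb]
  · intro a ha
    have hpairval : ∀ x : Q, pair (u⁻¹ • (χ - γ)) (u⁻¹ • x) = pair (χ - γ) x :=
      fun x => hequi u⁻¹ (χ - γ) x
    have hpa : pair (u⁻¹ • (χ - γ)) a = pair χ (u • a) - pair γ (u • a) := by
      have := hequi u⁻¹ (χ - γ) (u • a)
      rw [inv_smul_smul] at this
      rw [this, map_sub]
      simp
    have hcond : (u⁻¹ * w)⁻¹ • a = w⁻¹ • (u • a) := by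
      rw [mul_inv_rev, inv_inv, mul_smul]
    by_cases hua : u • a ∈ Φpos
    · -- case: u•a positive, so ⟨γ, u•a⟩ = 0
      have hγ0 : pair γ (u • a) = 0 := by
        have := (hu (u • a) hua).mp (by rwa [inv_smul_smul])
        exact this
      have huinv : u⁻¹ • (u • a) ∈ Φpos := by rwa [inv_smul_smul]
      simp only [hua, if_pos, hcond, hpa, hγ0, huinv, if_true, sub_zero, abs_zero]
    · -- case: u•a negative, b := -(u•a) positive
      have hb : -(u • a) ∈ Φpos := (hW u a ha).resolve_left hua
      have hbinv : u⁻¹ • (-(u • a)) ∉ Φpos := by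
        rw [smul_neg, inv_smul_smul]; exact hdisj a ha
      set b : Q := -(u • a) with hbdef
      have hgb0 : pair γ b ≠ 0 := fun h => hbinv ((hu b hb).mpr h)
      have hg1 : 1 ≤ pair γ b := lt_of_le_of_ne (hγdom b hb) (Ne.symm hgb0)
      have hc0 : 0 ≤ pair χ b := hχdom b hb
      have hχua : pair χ (u • a) = -pair χ b := by
        rw [hbdef, map_neg, neg_neg]
      have hγua : pair γ (u • a) = -pair γ b := by
        rw [hbdef, map_neg, neg_neg]
      have hwcond : (w⁻¹ • (u • a) ∈ Φpos) ↔ (w⁻¹ • b ∉ Φpos) := by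
        have he : w⁻¹ • (u • a) = -(w⁻¹ • b) := by
          simp [hbdef, smul_neg]
        rw [he]
        constructor
        · intro h hwb
          exact hdisj (w⁻¹ • b) hwb h
        · intro h
          exact (hW w⁻¹ b hb).resolve_left h
      simp only [if_neg hua]
      rw [if_neg hbinv]
      rw [hcond, hpa, hχua, hγua]
      set c := pair χ b
      set g := pair γ b
      have habs1 : |g - 1| = g - 1 := abs_of_nonneg (by omega)
      by_cases hwb : w⁻¹ • b ∈ Φpos
      · have hcond2 : w⁻¹ • (u • a) ∉ Φpos := fun h => (hwcond.mp h) hwb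
        rw [if_neg hcond2, if_pos hwb, habs1, abs_of_nonneg hc0]
        have hge : c - g ≥ -1 := by
          by_cases h2 : 2 ≤ g
          · exact (hmin b hb h2).1 hwb
          · omega
        have : |(-c - -g) - 1| = c - g + 1 := by
          rw [abs_sub_comm]
          rw [abs_of_nonneg (by omega)]
          ring
        rw [this]; ring
      · have hcond2 : w⁻¹ • (u • a) ∈ Φpos := hwcond.mpr hwb
        rw [if_pos hcond2, if_neg hwb, habs1]
        by_cases h2 : 2 ≤ g
        · have hge : 0 ≤ c - g := (hmin b hb h2).2 hwb
          rw [show (-c - -g : ℤ) = -(c - g) by ring, abs_neg,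
            abs_of_nonneg hge, abs_of_nonneg (by omega)]
          ring
        · have hgeq : g = 1 := by omega
          rw [hgeq]
          rw [show (-c - -1 : ℤ) = -(c - 1) by ring, abs_neg]
          ring
end

section
/- Let 0 < r < n with c = gcd(r, n), and consider the permutation σ of {1,…,n} defined by σ(i) = j iff j ≡ i + r (mod n). Then the orbits of σ on {1,…,n} are exactly the residue classes modulo c, and the composition of σ with the c-cycle (1 2 ⋯ c) acts transitively on {1,…,n}, i.e. σ∘(1 2 ⋯ c) is an n-cycle. -/
open Fin.NatCast

private lemma rot_pow_val (n r : ℕ) [NeZero n] (k : ℕ) (x : Fin n) :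
    (((Equiv.addRight (r : Fin n)) ^ k) x : ℕ) = (x.val + k * r) % n := by
  induction k with
  | zero => simp [Nat.mod_eq_of_lt x.isLt]
  | succ k ih =>
    rw [pow_succ', Equiv.Perm.mul_apply, Equiv.coe_addRight, Fin.val_add, ih, Fin.val_natCast,
      Nat.mod_add_mod, Nat.add_mod_mod, Nat.succ_mul, Nat.add_assoc]

private lemma solv_mod (n r : ℕ) (hn : 0 < n) (hr : 0 < r) (d : ℕ) (hd : Nat.gcd r n ∣ d) :
    ∃ k : ℕ, (k * r) % n = d % n := by
  set c := Nat.gcd r n with hc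
  have hc0 : 0 < c := Nat.gcd_pos_of_pos_left n hr
  obtain ⟨r', hr'⟩ : c ∣ r := Nat.gcd_dvd_left r n
  obtain ⟨m, hm⟩ : c ∣ n := Nat.gcd_dvd_right r n
  obtain ⟨d', hd'⟩ := hd
  have hm0 : 0 < m := Nat.pos_of_ne_zero (by rintro rfl; simp [hm] at hn)
  have : NeZero m := ⟨hm0.ne'⟩
  have hcop : Nat.Coprime r' m := by
    have h1 : r / c = r' := by rw [hr', Nat.mul_div_cancel_left _ hc0]
    have h2 : n / c = m := by rw [hm, Nat.mul_div_cancel_left _ hc0]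
    have h3 := Nat.coprime_div_gcd_div_gcd (m := r) (n := n) hc0
    rwa [← hc, h1, h2] at h3
  have hu : IsUnit (r' : ZMod m) := (ZMod.unitOfCoprime r' hcop).isUnit
  obtain ⟨z, hz⟩ : ∃ z : ZMod m, z * (r' : ZMod m) = (d' : ZMod m) :=
    ⟨(d' : ZMod m) * (hu.unit⁻¹ : Units (ZMod m)), by
      rw [mul_assoc, IsUnit.val_inv_mul, mul_one]⟩
  refine ⟨z.val, ?_⟩
  have hk : (z.val * r') % m = d' % m := by
    rw [← ZMod.natCast_eq_natCast_iff']
    push_cast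
    rw [ZMod.natCast_val, ZMod.cast_id, hz]
  rw [hm, hd', hr']
  calc (z.val * (c * r')) % (c * m) = (c * (z.val * r')) % (c * m) := by ring_nf
    _ = c * ((z.val * r') % m) := Nat.mul_mod_mul_left c _ m
    _ = c * (d' % m) := by rw [hk]
    _ = (c * d') % (c * m) := (Nat.mul_mod_mul_left c d' m).symm

private lemma exists_rot (n r i j : ℕ) (hn : 0 < n) (hr : 0 < r) (hi : i < n) (hj : j < n)
    (h : i % Nat.gcd r n = j % Nat.gcd r n) : ∃ k : ℕ, (i + k * r) % n = j := by
  set c := Nat.gcd r n with hc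
  have hc0 : 0 < c := Nat.gcd_pos_of_pos_left n hr
  have hcn : c ∣ n := Nat.gcd_dvd_right r n
  have h1 : (n + j) % c = i % c := by
    obtain ⟨m, hm⟩ := hcn
    rw [hm, Nat.mul_add_mod, ← h]
  have hd : c ∣ (n + j - i) := by
    refine ⟨(n + j) / c - i / c, ?_⟩
    have e1 := Nat.div_add_mod (n + j) c
    have e2 := Nat.div_add_mod i c
    rw [Nat.mul_sub]
    omega
  obtain ⟨k, hk⟩ := solv_mod n r hn hr (n + j - i) hd
  refine ⟨k, ?_⟩
  rw [Nat.add_mod i (k * r) n, hk, Nat.mod_eq_of_lt hi, Nat.add_mod_mod]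
  have : i + (n + j - i) = n + j := by omega
  rw [this, Nat.add_mod_left, Nat.mod_eq_of_lt hj]

private lemma finRotate_val (c : ℕ) (v : Fin c) : ((finRotate c v : Fin c) : ℕ) = (v + 1) % c := by
  match c, v with
  | c + 1, v => rw [finRotate_succ_apply, Fin.val_add, Fin.val_one', Nat.add_mod_mod]

/-- He's Lemma on rotations: let `0 < r < n` and `c = gcd(r, n)`. The permutation
`σ` of `Fin n` given by `i ↦ i + r (mod n)` has as orbits exactly the residue
classes modulo `c`, and the composition of `σ` with the `c`-cycle `(1 2 ⋯ c)`
(realized as `finRotate c` on the first `c` points, fixing the rest) acts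
transitively on `Fin n`, i.e. it is an `n`-cycle. -/
theorem rotation_orbits_and_transitive (n r : ℕ) [NeZero n] (hr : 0 < r) (hrn : r < n) :
    (∀ i j : Fin n, (Equiv.addRight (r : Fin n)).SameCycle i j ↔
        (i : ℕ) % Nat.gcd r n = (j : ℕ) % Nat.gcd r n) ∧
      ∀ i j : Fin n,
        ((Equiv.addRight (r : Fin n)) *
            (finRotate (Nat.gcd r n)).viaFintypeEmbedding
              (Fin.castLEEmb ((Nat.gcd_le_left n hr).trans hrn.le))).SameCycle i j := by
  have hn : 0 < n := Nat.pos_of_ne_zero (NeZero.ne n)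
  set c := Nat.gcd r n with hc
  have hc0 : 0 < c := Nat.gcd_pos_of_pos_left n hr
  have hcle : c ≤ n := (Nat.gcd_le_left n hr).trans hrn.le
  have hcn : c ∣ n := Nat.gcd_dvd_right r n
  obtain ⟨r', hr'⟩ : c ∣ r := Nat.gcd_dvd_left r n
  obtain ⟨m, hm⟩ : c ∣ n := hcn
  have hcn : c ∣ n := ⟨m, hm⟩
  have hm0 : 0 < m := Nat.pos_of_ne_zero (by rintro rfl; simp [hm] at hn)
  have hcop : Nat.Coprime r' m := by
    have h1 : r / c = r' := by rw [hr', Nat.mul_div_cancel_left _ hc0]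
    have h2 : n / c = m := by rw [hm, Nat.mul_div_cancel_left _ hc0]
    have h3 := Nat.coprime_div_gcd_div_gcd (m := r) (n := n) hc0
    rwa [← hc, h1, h2] at h3
  set σ : Equiv.Perm (Fin n) := Equiv.addRight (r : Fin n) with hσ
  set τ : Equiv.Perm (Fin n) :=
    (finRotate c).viaFintypeEmbedding (Fin.castLEEmb hcle) with hτ
  -- Part 1
  have part1 : ∀ i j : Fin n, σ.SameCycle i j ↔ (i : ℕ) % c = (j : ℕ) % c := by
    intro i j
    constructor
    · intro hsc
      obtain ⟨k, -, hk⟩ := hsc.exists_pow_eq'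
      have hv : (j : ℕ) = ((i : ℕ) + k * r) % n := by rw [← hk, rot_pow_val]
      rw [hv, Nat.mod_mod_of_dvd _ hcn, hr']
      have : (i : ℕ) + k * (c * r') = (i : ℕ) + (k * r') * c := by ring
      rw [this, Nat.add_mul_mod_self_right]
    · intro h
      obtain ⟨k, hk⟩ := exists_rot n r i j hn hr i.isLt j.isLt h
      exact ⟨(k : ℤ), by rw [zpow_natCast]; exact Fin.ext (by rw [rot_pow_val]; exact hk)⟩
  refine ⟨part1, ?_⟩
  set π : Equiv.Perm (Fin n) := σ * τ with hπ
  -- τ fixes points with value ≥ c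
  have hτ_hi : ∀ x : Fin n, c ≤ x.val → τ x = x := by
    intro x hx
    apply Equiv.Perm.viaFintypeEmbedding_apply_notMem_range
    rintro ⟨a, rfl⟩
    exact absurd a.isLt (not_lt.mpr (by simpa using hx))
  have hπ_hi : ∀ x : Fin n, c ≤ x.val → ((π x : Fin n) : ℕ) = (x.val + r) % n := by
    intro x hx
    rw [hπ, Equiv.Perm.mul_apply, hτ_hi x hx, hσ, Equiv.coe_addRight, Fin.val_add,
      Fin.val_natCast, Nat.add_mod_mod]
  have hπ_lo : ∀ x : Fin n, x.val < c → ((π x : Fin n) : ℕ) = ((x.val + 1) % c + r) % n := by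
    intro x hx
    have hxe : x = Fin.castLEEmb hcle ⟨x.val, hx⟩ := Fin.ext rfl
    have : τ x = Fin.castLEEmb hcle (finRotate c ⟨x.val, hx⟩) := by
      rw [hτ]; conv_lhs => rw [hxe]
      exact Equiv.Perm.viaFintypeEmbedding_apply_image _ _ _
    rw [hπ, Equiv.Perm.mul_apply, this, hσ, Equiv.coe_addRight, Fin.val_add, Fin.val_natCast,
      Nat.add_mod_mod]
    congr 2
    simpa using finRotate_val c ⟨x.val, hx⟩
  -- key arithmetic facts
  have hnmr : m * r = n * r' := by rw [hr', hm]; ring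
  -- iterating π from a point in the first block
  have hB : ∀ t : ℕ, 1 ≤ t → t ≤ m → ∀ x : Fin n, x.val < c →
      (((π ^ t) x : Fin n) : ℕ) = ((x.val + 1) % c + t * r) % n := by
    intro t
    induction t with
    | zero => omega
    | succ t ih =>
      intro _ htm x hx
      rcases Nat.eq_zero_or_pos t with rfl | ht1
      · rw [pow_one, hπ_lo x hx]; norm_num
      · have hv := ih ht1 (by omega) x hx
        set A := (x.val + 1) % c with hA
        have hAc : A < c := Nat.mod_lt _ hc0
        have hAn : A < n := lt_of_lt_of_le hAc hcle
        -- the current point has value ≥ c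
        have hge : c ≤ (((π ^ t) x : Fin n) : ℕ) := by
          by_contra hlt
          push_neg at hlt
          set v := (((π ^ t) x : Fin n) : ℕ) with hvv
          have hvc : v % c = A := by
            rw [hv, Nat.mod_mod_of_dvd _ hcn, hr']
            have : A + t * (c * r') = A + (t * r') * c := by ring
            rw [this, Nat.add_mul_mod_self_right, Nat.mod_eq_of_lt hAc]
          have hveq : v = A := by rw [← hvc, Nat.mod_eq_of_lt hlt]
          -- deduce n ∣ t * r
          have hb0 : (t * r) % n = 0 := by
            have h2 : (A + (t * r) % n) % n = A := by rw [Nat.add_mod_mod, ← hv, hveq]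
            have hbn : (t * r) % n < n := Nat.mod_lt _ hn
            set b := (t * r) % n with hb
            rcases Nat.lt_or_ge (A + b) n with hcase | hcase
            · rw [Nat.mod_eq_of_lt hcase] at h2; omega
            · rw [Nat.mod_eq_sub_mod hcase, Nat.mod_eq_of_lt (by omega)] at h2; omega
          have hdvd : n ∣ t * r := Nat.dvd_of_mod_eq_zero hb0
          have hmt : m ∣ t := by
            have : c * m ∣ c * (t * r') := by
              rw [← hm]
              have : c * (t * r') = t * r := by rw [hr']; ring
              rw [this]; exact hdvd
            have hmtr' : m ∣ t * r' := (mul_dvd_mul_iff_left hc0.ne').mp this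
            exact (Nat.Coprime.dvd_of_dvd_mul_right (hcop.symm) hmtr')
          have := Nat.le_of_dvd ht1 hmt
          omega
        rw [pow_succ', Equiv.Perm.mul_apply, hπ_hi _ hge, hv, Nat.mod_add_mod]
        congr 1
        ring
  -- iterating π through whole blocks
  have hA : ∀ q : ℕ, (hq : q < c) → (π ^ (q * m)) 0 = ⟨q, lt_of_lt_of_le hq hcle⟩ := by
    intro q
    induction q with
    | zero => intro hq; apply Fin.ext; simp
    | succ q ih =>
      intro hq
      have hq' : q < c := by omega
      have : q.succ * m = m + q * m := by rw [Nat.succ_mul, Nat.add_comm]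
      rw [this, pow_add, Equiv.Perm.mul_apply, ih hq']
      apply Fin.ext
      rw [hB m hm0 le_rfl ⟨q, lt_of_lt_of_le hq' hcle⟩ hq']
      show ((q + 1) % c + m * r) % n = q + 1
      have : (q + 1) % c + m * r = (q + 1) % c + r' * n := by rw [hnmr]; ring
      rw [this, Nat.add_mul_mod_self_right, Nat.mod_eq_of_lt (lt_of_lt_of_le (Nat.mod_lt _ hc0) hcle),
        Nat.mod_eq_of_lt hq]
  -- coverage: every point is in the orbit of 0
  have cov : ∀ j : Fin n, ∃ k : ℕ, (π ^ k) 0 = j := by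
    intro j
    set s := (j : ℕ) % c with hs
    have hsc : s < c := Nat.mod_lt _ hc0
    have hsn : s < n := lt_of_lt_of_le hsc hcle
    obtain ⟨k, hk⟩ := exists_rot n r s j hn hr hsn j.isLt
      (by rw [hs, Nat.mod_mod_of_dvd _ dvd_rfl])
    set t := k % m with ht
    have htm : t < m := Nat.mod_lt _ hm0
    have hjt : (s + t * r) % n = (j : ℕ) := by
      have e : k * r = t * r + (k / m * r') * n := by
        have hk' : k = m * (k / m) + t := (Nat.div_add_mod k m).symm
        calc k * r = (m * (k / m) + t) * r := by rw [← hk']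
          _ = t * r + (k / m) * (m * r) := by ring
          _ = t * r + (k / m * r') * n := by rw [hnmr]; ring
      rw [← hk, e, ← Nat.add_assoc, Nat.add_mul_mod_self_right]
    rcases Nat.eq_zero_or_pos t with h0 | ht1
    · rw [h0] at hjt
      refine ⟨s * m, ?_⟩
      rw [hA s hsc]
      apply Fin.ext
      show s = (j : ℕ)
      rw [← hjt]
      simp [Nat.mod_eq_of_lt hsn]
    · set q := (s + c - 1) % c with hqdef
      have hq : q < c := Nat.mod_lt _ hc0
      have hq1 : (q + 1) % c = s := by
        rw [hqdef, Nat.mod_add_mod]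
        have : s + c - 1 + 1 = s + c := by omega
        rw [this, Nat.add_mod_right, Nat.mod_eq_of_lt hsc]
      refine ⟨t + q * m, ?_⟩
      rw [pow_add, Equiv.Perm.mul_apply, hA q hq]
      apply Fin.ext
      rw [hB t ht1 htm.le ⟨q, lt_of_lt_of_le hq hcle⟩ hq]
      show ((q + 1) % c + t * r) % n = (j : ℕ)
      rw [hq1, hjt]
  -- conclude transitivity
  intro i j
  have h0 : ∀ y : Fin n, π.SameCycle 0 y := by
    intro y
    obtain ⟨k, hk⟩ := cov y
    exact ⟨(k : ℤ), by rw [zpow_natCast]; exact hk⟩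
  exact (h0 i).symm.trans (h0 j)
end

section
/- Let H be the Hecke algebra over ℤ[v, v⁻¹] of an (extended affine) Coxeter group with standard basis {T_w̃} satisfying T_x̃ T_ỹ = T_{x̃ỹ} when l(x̃)+l(ỹ)=l(x̃ỹ) and (T_s − v)(T_s + v⁻¹) = 0 for simple reflections s. If s is a simple reflection and w̃ satisfies l(s w̃ s) < l(w̃), then T_{w̃} ≡ (v − v⁻¹) T_{w̃ s} + T_{s w̃ s} modulo the commutator subspace [H, H]. -/
open LaurentPolynomial

/-- In the Hecke algebra `H` over `ℤ[v,v⁻¹]` of an (extended affine) Coxeter group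
(modeled abstractly: basis elements `Tb w̃` satisfying `Tb x̃ · Tb ỹ = Tb (x̃ỹ)` when
lengths add and the quadratic relation `(T_s − v)(T_s + v⁻¹) = 0`), if `s` is a
simple reflection and `ℓ(s w̃ s) < ℓ(w̃)`, then
`T_{w̃} ≡ (v − v⁻¹) T_{w̃ s} + T_{s w̃ s}` modulo the commutator subspace `[H,H]`. -/
theorem hecke_commutator_rel {G : Type*} [Group G] (ℓ : G → ℕ) (S : Set G)
    {H : Type*} [Ring H] [Algebra (LaurentPolynomial ℤ) H]
    (Tb : G → H)
    (hmul : ∀ x y : G, ℓ (x * y) = ℓ x + ℓ y → Tb (x * y) = Tb x * Tb y)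
    (hquad : ∀ s ∈ S,
      (Tb s - algebraMap (LaurentPolynomial ℤ) H (T 1)) *
        (Tb s + algebraMap (LaurentPolynomial ℤ) H (T (-1))) = 0)
    (hS : ∀ s ∈ S, s * s = 1)
    (hlen1 : ∀ s ∈ S, ℓ s = 1)
    (hstepl : ∀ s ∈ S, ∀ w : G, ℓ (s * w) = ℓ w + 1 ∨ ℓ (s * w) + 1 = ℓ w)
    (hstepr : ∀ s ∈ S, ∀ w : G, ℓ (w * s) = ℓ w + 1 ∨ ℓ (w * s) + 1 = ℓ w)
    (s : G) (hsS : s ∈ S) (w : G) (hw : ℓ (s * w * s) < ℓ w) :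
    Tb w - (algebraMap (LaurentPolynomial ℤ) H (T 1 - T (-1)) * Tb (w * s) + Tb (s * w * s))
      ∈ Submodule.span (LaurentPolynomial ℤ) {z : H | ∃ a b : H, z = a * b - b * a} := by
  have hss := hS s hsS
  have hls := hlen1 s hsS
  -- length facts
  have hassoc : s * (w * s) = s * w * s := (mul_assoc s w s).symm
  have l1 := hstepr s hsS w
  have l2 := hstepl s hsS (w * s)
  rw [hassoc] at l2
  have hlws : ℓ (w * s) + 1 = ℓ w := by rcases l1 with h | h <;> rcases l2 with h' | h' <;> omega
  have hlsws : ℓ (s * w * s) + 1 = ℓ (w * s) := by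
    rcases l2 with h' | h' <;> omega
  -- group identities
  have hsx : s * (s * w * s) = w * s := by
    rw [← mul_assoc, ← mul_assoc, hss, one_mul]
  have hxs : w * s * s = w := by rw [mul_assoc, hss, mul_one]
  set A := Tb s with hA
  set X := Tb (s * w * s) with hX
  -- Tb (w*s) = A * X
  have e1 : Tb (w * s) = A * X := by
    have := hmul s (s * w * s) (by rw [hsx, hls]; omega)
    rw [hsx] at this; exact this
  -- Tb w = (A * X) * A
  have e2 : Tb w = A * X * A := by
    have := hmul (w * s) s (by rw [hxs, hls]; omega)
    rw [hxs, e1] at this; exact this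
  -- quadratic relation
  set c : H := algebraMap (LaurentPolynomial ℤ) H (T 1 - T (-1)) with hc
  have hAA : A * A = c * A + 1 := by
    have hq := hquad s hsS
    have h1 : algebraMap (LaurentPolynomial ℤ) H (T 1) *
        algebraMap (LaurentPolynomial ℤ) H (T (-1)) = 1 := by
      rw [← map_mul, ← T_add]
      norm_num
    have h2 : A * algebraMap (LaurentPolynomial ℤ) H (T (-1)) =
        algebraMap (LaurentPolynomial ℤ) H (T (-1)) * A :=
      (Algebra.commutes _ _).symm
    rw [sub_mul, mul_add, mul_add, h1, h2] at hq
    rw [hc, map_sub, sub_mul]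
    linear_combination (norm := noncomm_ring) hq
  have hXc : X * c = c * X := (Algebra.commutes _ _).symm
  -- key decomposition
  have key : Tb w - (c * Tb (w * s) + Tb (s * w * s)) =
      (A * (X * A) - (X * A) * A) + (T 1 - T (-1) : LaurentPolynomial ℤ) • (X * A - A * X) := by
    rw [e1, e2, Algebra.smul_def, ← hc]
    have h1 : (X * A) * A = c * (X * A) + X := by
      rw [mul_assoc, hAA, mul_add, mul_one, ← mul_assoc, hXc, mul_assoc]
    rw [h1]
    noncomm_ring
    rw [hassoc]
  rw [key]
  refine Submodule.add_mem _ (Submodule.subset_span ⟨A, X * A, rfl⟩)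
    (Submodule.smul_mem _ _ (Submodule.subset_span ⟨X, A, rfl⟩))
end
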